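/- arXiv:2012.11378 — 2 statements merged into one kernel-verified Lean document; each statement's English description precedes it below -/
import Mathlib

section
/- Let G be 2-vertex-connected, v ∈ V(G), and S a subset of V(G) not containing v with |S| ≥ 2. Then there exist two paths from v to two distinct vertices of S that are vertex-disjoint except at v (a 'fan' of size 2). -/
def TwoConnected {V : Type*} (G : SimpleGraph V) : Prop :=
  3 ≤ Nat.card V ∧ ∀ v : V, ((⊤ : G.Subgraph).deleteVerts {v}).coe.Connected

/-!
The key input is Whitney's theorem: in a 2-connected graph two vertices `u ≠ v` are joined by two
internally disjoint paths. Induct along a walk from `v` to `u`; let `w` be the neighbour of `v`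
on it and `A`, `B` internally disjoint `u`-`w` paths. If `v` lies on `A`, say, then `A[u,v]` and
`B` followed by `A[v,w]` backwards work. Otherwise take a `u`-`v` path avoiding `w`; it leaves
`A ∪ B` for the last time at some `y ≠ w`, say on `A`, and `A[u,y]` followed by the rest of that
path, together with `B` extended by the edge `wv`, work.

For the fan, cut two internally disjoint paths from `v` to some `s ∈ S` at their first vertices
in `S`. If these differ we are done. Otherwise both end at `s`, and the same rerouting, along a
path from `v` into `S` that avoids `s`, replaces one of them by a path to another vertex of `S`.
-/

namespace SimpleGraph.Walk

variable {V : Type*} {G : SimpleGraph V} {u v w : V}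

def InternallyDisjoint (p q : G.Walk u v) : Prop :=
  ∀ x ∈ p.support, x ∈ q.support → x = u ∨ x = v

lemma InternallyDisjoint.symm {p q : G.Walk u v} (h : p.InternallyDisjoint q) :
    q.InternallyDisjoint p :=
  fun x hq hp => h x hp hq

lemma IsPath.append {p : G.Walk u v} {q : G.Walk v w} (hp : p.IsPath) (hq : q.IsPath)
    (h : ∀ x ∈ p.support, x ∈ q.support → x = v) : (p.append q).IsPath := by
  rw [isPath_def, support_append, List.nodup_append]
  refine ⟨hp.support_nodup, hq.support_nodup.sublist (List.tail_sublist _), ?_⟩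
  rintro x hxp _ hxq rfl
  have hq' := hq.support_nodup
  rw [← cons_tail_support] at hq'
  exact (List.nodup_cons.mp hq').1 (h x hxp (List.mem_of_mem_tail hxq) ▸ hxq)

lemma inter_support_eq_singleton {p : G.Walk v u} {q : G.Walk v w}
    (h : ∀ x ∈ p.support, x ∈ q.support → x = v) :
    {x | x ∈ p.support} ∩ {x | x ∈ q.support} = {v} := by
  ext x
  refine ⟨fun ⟨hp, hq⟩ => h x hp hq, ?_⟩
  rintro rfl
  exact ⟨p.start_mem_support, q.start_mem_support⟩

variable [DecidableEq V]

lemma IsPath.eq_of_mem_takeUntil_of_mem_dropUntil {p : G.Walk u v} (hp : p.IsPath)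
    (hw : w ∈ p.support) {x : V} (hx₁ : x ∈ (p.takeUntil w hw).support)
    (hx₂ : x ∈ (p.dropUntil w hw).support) : x = w := by
  rw [← p.take_spec hw, isPath_def, support_append, List.nodup_append] at hp
  rw [← cons_tail_support] at hx₂
  exact (List.mem_cons.mp hx₂).resolve_right fun hx => hp.2.2 x hx₁ x hx rfl

lemma exists_isPath_first_mem {S : Set V} (p : G.Walk u v) (hv : v ∈ S) :
    ∃ s ∈ S, ∃ q : G.Walk u s, q.IsPath ∧ q.support ⊆ p.support ∧
      ∀ x ∈ q.support, x ∈ S → x = s := by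
  induction p with
  | nil => exact ⟨_, hv, nil, .nil, List.Subset.refl _, by simp⟩
  | @cons u w v h p ih =>
    by_cases hu : u ∈ S
    · exact ⟨u, hu, nil, .nil, by simp, by simp⟩
    obtain ⟨s, hs, q, -, hqp, hqS⟩ := ih hv
    have hsub : (cons h q).bypass.support ⊆ (cons h q).support :=
      support_bypass_subset_support _
    refine ⟨s, hs, (cons h q).bypass, bypass_isPath _, ?_, ?_⟩
    · exact List.Subset.trans hsub (List.cons_subset_cons u hqp)
    · intro x hx hxS
      rcases List.mem_cons.mp (hsub hx) with rfl | hx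
      · exact absurd hxS hu
      · exact hqS x hx hxS

lemma exists_isPath_last_mem {S : Set V} (p : G.Walk u v) (hu : u ∈ S) :
    ∃ s ∈ S, ∃ q : G.Walk s v, q.IsPath ∧ q.support ⊆ p.support ∧
      ∀ x ∈ q.support, x ∈ S → x = s := by
  obtain ⟨s, hs, q, hq, hqp, hqS⟩ := p.reverse.exists_isPath_first_mem hu
  refine ⟨s, hs, q.reverse, hq.reverse, ?_, by simpa using hqS⟩
  simpa [List.reverse_subset, List.subset_reverse] using hqp

lemma InternallyDisjoint.exists_isPath_branch {A B : G.Walk u v} (hAB : A.InternallyDisjoint B)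
    (hA : A.IsPath) {y z : V} (hy : y ∈ A.support) (hyv : y ≠ v) {r : G.Walk y z}
    (hr : r.IsPath) (hrAB : ∀ x ∈ r.support, x ∈ A.support ∨ x ∈ B.support → x = y) :
    ∃ P : G.Walk u z, P.IsPath ∧ (∀ x ∈ P.support, x ∈ A.support ∨ x ∈ r.support) ∧
      ∀ x ∈ P.support, x ∈ B.support → x = u := by
  have htake := A.support_takeUntil_subset_support hy
  have hv : v ∉ (A.takeUntil y hy).support := endpoint_notMem_support_takeUntil hA hy hyv.symm
  refine ⟨(A.takeUntil y hy).append r, ?_, ?_, ?_⟩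
  · exact (hA.takeUntil hy).append hr fun x hx hxr => hrAB x hxr (.inl (htake hx))
  · intro x hx
    rcases (mem_support_append_iff _ _).mp hx with hx | hx
    exacts [.inl (htake hx), .inr hx]
  · intro x hx hxB
    rcases (mem_support_append_iff _ _).mp hx with hx | hx
    · exact (hAB x (htake hx) hxB).resolve_right fun hxv => hv (hxv ▸ hx)
    · obtain rfl := hrAB x hx (.inr hxB)
      exact (hAB x hy hxB).resolve_right hyv

lemma InternallyDisjoint.exists_of_mem_support {A B : G.Walk u w} (hA : A.IsPath)
    (hB : B.IsPath) (hAB : A.InternallyDisjoint B) (hv : v ∈ A.support) (hvu : v ≠ u)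
    (hvw : v ≠ w) : ∃ A' B' : G.Walk u v, A'.IsPath ∧ B'.IsPath ∧ A'.InternallyDisjoint B' := by
  have htake := A.support_takeUntil_subset_support hv
  have hdrop := A.support_dropUntil_subset_support hv
  have hu : u ∉ (A.dropUntil v hv).support := fun hu =>
    hvu (hA.eq_of_mem_takeUntil_of_mem_dropUntil hv (start_mem_support _) hu).symm
  have hw : w ∉ (A.takeUntil v hv).support := endpoint_notMem_support_takeUntil hA hv hvw.symm
  refine ⟨A.takeUntil v hv, B.append (A.dropUntil v hv).reverse, hA.takeUntil hv,
    hB.append (hA.dropUntil hv).reverse fun x hxB hx => ?_, fun x hx hx' => ?_⟩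
  · rw [support_reverse, List.mem_reverse] at hx
    exact (hAB x (hdrop hx) hxB).resolve_left fun hxu => hu (hxu ▸ hx)
  · rcases (mem_support_append_iff _ _).mp hx' with hxB | hx'
    · exact .inl ((hAB x (htake hx) hxB).resolve_right fun hxw => hw (hxw ▸ hx))
    · rw [support_reverse, List.mem_reverse] at hx'
      exact .inr (hA.eq_of_mem_takeUntil_of_mem_dropUntil hv hx hx')

lemma InternallyDisjoint.exists_of_branch {A B : G.Walk u w} (hA : A.IsPath) (hB : B.IsPath)
    (hAB : A.InternallyDisjoint B) (hwv : G.Adj w v) (hvB : v ∉ B.support) {y : V}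
    (hy : y ∈ A.support) (hyw : y ≠ w) {r : G.Walk y v} (hr : r.IsPath)
    (hrAB : ∀ x ∈ r.support, x ∈ A.support ∨ x ∈ B.support → x = y) :
    ∃ A' B' : G.Walk u v, A'.IsPath ∧ B'.IsPath ∧ A'.InternallyDisjoint B' := by
  obtain ⟨P, hP, -, hPB⟩ := hAB.exists_isPath_branch hA hy hyw hr hrAB
  refine ⟨P, B.concat hwv, hP, hB.concat hvB hwv, fun x hx hx' => ?_⟩
  rcases List.mem_append.mp ((support_concat B hwv) ▸ hx') with hxB | hxv
  exacts [.inl (hPB x hx hxB), .inr (List.mem_singleton.mp hxv)]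

lemma InternallyDisjoint.exists_fan_of_branch {S : Set V} (hv : v ∉ S) {A B : G.Walk v w}
    (hAB : A.InternallyDisjoint B) (hA : A.IsPath) (hB : B.IsPath)
    (hAS : ∀ x ∈ A.support, x ∈ S → x = w) (hBS : ∀ x ∈ B.support, x ∈ S → x = w) {y s : V}
    (hy : y ∈ A.support) (hyw : y ≠ w) {r : G.Walk y s} (hr : r.IsPath)
    (hrAB : ∀ x ∈ r.support, x ∈ A.support ∨ x ∈ B.support → x = y)
    (hrS : ∀ x ∈ r.support, x ∈ S → x = s) :
    ∃ (p₁ : G.Walk v w) (p₂ : G.Walk v s), p₁.IsPath ∧ p₂.IsPath ∧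
      (∀ x ∈ p₁.support, x ∈ p₂.support → x = v) ∧
      (∀ x ∈ p₁.support, x ∈ S → x = w) ∧ (∀ x ∈ p₂.support, x ∈ S → x = s) := by
  obtain ⟨P, hP, hPAr, hPB⟩ := hAB.exists_isPath_branch hA hy hyw hr hrAB
  refine ⟨B, P, hB, hP, fun x hxB hxP => hPB x hxP hxB, hBS, fun x hx hxS => ?_⟩
  rcases hPAr x hx with hxA | hxr
  · obtain rfl := hAS x hxA hxS
    exact absurd (hPB x hx B.end_mem_support ▸ hxS) hv
  · exact hrS x hxr hxS

end SimpleGraph.Walk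

namespace TwoConnected

open SimpleGraph Walk

variable {V : Type*} {G : SimpleGraph V}

lemma exists_walk_notMem_support (hG : TwoConnected G) {a b w : V} (ha : a ≠ w) (hb : b ≠ w) :
    ∃ p : G.Walk a b, w ∉ p.support := by
  obtain ⟨q⟩ := (hG.2 w).preconnected ⟨a, by simp [ha]⟩ ⟨b, by simp [hb]⟩
  refine ⟨q.map (Subgraph.hom _), fun hw => ?_⟩
  obtain ⟨⟨x, hx⟩, -, hxw⟩ := List.mem_map.mp ((Walk.support_map _ _) ▸ hw)
  exact (Set.mem_sdiff_singleton.mp hx).2 hxw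

lemma connected (hG : TwoConnected G) : G.Connected := by
  -- `Nat.card` vanishes on infinite types, so `V` is finite.
  obtain ⟨_, _⟩ := Nat.card_ne_zero.mp (by have := hG.1; omega : Nat.card V ≠ 0)
  have h3 : 3 ≤ ENat.card V := by
    rw [ENat.card_eq_coe_natCard]
    exact_mod_cast hG.1
  refine .mk fun a b => ?_
  obtain ⟨w, hwa, hwb⟩ := ENat.exists_ne_ne_of_three_le h3 a b
  obtain ⟨p, -⟩ := hG.exists_walk_notMem_support hwa.symm hwb.symm
  exact ⟨p⟩

lemma exists_internally_disjoint_paths_of_adj (hG : TwoConnected G) {u v w : V}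
    {A B : G.Walk u w} (hA : A.IsPath) (hB : B.IsPath) (hAB : A.InternallyDisjoint B)
    (hwv : G.Adj w v) (hvu : v ≠ u) (hwu : w ≠ u) :
    ∃ A' B' : G.Walk u v, A'.IsPath ∧ B'.IsPath ∧ A'.InternallyDisjoint B' := by
  classical
  by_cases hvA : v ∈ A.support
  · exact hAB.exists_of_mem_support hA hB hvA hvu hwv.ne'
  by_cases hvB : v ∈ B.support
  · exact hAB.symm.exists_of_mem_support hB hA hvB hvu hwv.ne'
  obtain ⟨P, hPw⟩ := hG.exists_walk_notMem_support hwu.symm hwv.ne'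
  obtain ⟨y, hyAB, r, hr, hrP, hrAB⟩ :=
    P.exists_isPath_last_mem (S := {x | x ∈ A.support ∨ x ∈ B.support}) (.inl A.start_mem_support)
  have hyw : y ≠ w := fun h => hPw (hrP (h ▸ r.start_mem_support))
  rcases hyAB with hyA | hyB
  · exact hAB.exists_of_branch hA hB hwv hvB hyA hyw hr hrAB
  · exact hAB.symm.exists_of_branch hB hA hwv hvA hyB hyw hr fun x hx h => hrAB x hx h.symm

theorem exists_internally_disjoint_paths (hG : TwoConnected G) {u v : V} (huv : u ≠ v) :
    ∃ A B : G.Walk u v, A.IsPath ∧ B.IsPath ∧ A.InternallyDisjoint B := by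
  obtain ⟨p⟩ := hG.connected v u
  induction p with
  | nil => exact absurd rfl huv
  | @cons v w u hvw p ih =>
    by_cases hwu : w = u
    · subst hwu
      have hp : (cons hvw.symm nil : G.Walk w v).IsPath := by simp [hvw.ne']
      exact ⟨_, _, hp, hp, fun x hx _ => by simpa using hx⟩
    obtain ⟨A, B, hA, hB, hAB⟩ := ih (Ne.symm hwu)
    exact hG.exists_internally_disjoint_paths_of_adj hA hB hAB hvw.symm huv.symm hwu

lemma exists_fan_of_internallyDisjoint (hG : TwoConnected G) {S : Set V} {v s t : V}
    (hv : v ∉ S) (hs : s ∈ S) (ht : t ∈ S) (hts : t ≠ s) {A B : G.Walk v s} (hA : A.IsPath)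
    (hB : B.IsPath) (hAB : A.InternallyDisjoint B) (hAS : ∀ x ∈ A.support, x ∈ S → x = s)
    (hBS : ∀ x ∈ B.support, x ∈ S → x = s) :
    ∃ s₂ ∈ S, s₂ ≠ s ∧ ∃ (p₁ : G.Walk v s) (p₂ : G.Walk v s₂), p₁.IsPath ∧ p₂.IsPath ∧
      (∀ x ∈ p₁.support, x ∈ p₂.support → x = v) ∧
      (∀ x ∈ p₁.support, x ∈ S → x = s) ∧ (∀ x ∈ p₂.support, x ∈ S → x = s₂) := by
  classical
  obtain ⟨R, hRs⟩ := hG.exists_walk_notMem_support (ne_of_mem_of_not_mem hs hv).symm hts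
  obtain ⟨s₂, hs₂, R₁, -, hR₁R, hR₁S⟩ := R.exists_isPath_first_mem ht
  obtain ⟨y, hyAB, r, hr, hrR₁, hrAB⟩ :=
    R₁.exists_isPath_last_mem (S := {x | x ∈ A.support ∨ x ∈ B.support}) (.inl A.start_mem_support)
  have hsr : s ∉ r.support := fun h => hRs (hR₁R (hrR₁ h))
  have hys : y ≠ s := fun h => hsr (h ▸ r.start_mem_support)
  have hrS : ∀ x ∈ r.support, x ∈ S → x = s₂ := fun x hx => hR₁S x (hrR₁ hx)
  refine ⟨s₂, hs₂, fun h => hsr (h ▸ r.end_mem_support), ?_⟩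
  rcases hyAB with hyA | hyB
  · exact hAB.exists_fan_of_branch hv hA hB hAS hBS hyA hys hr hrAB hrS
  · exact hAB.symm.exists_fan_of_branch hv hB hA hBS hAS hyB hys hr
      (fun x hx h => hrAB x hx h.symm) hrS

lemma exists_fan (hG : TwoConnected G) {v : V} {S : Set V} (hv : v ∉ S) (hS : 2 ≤ S.ncard) :
    ∃ s₁ ∈ S, ∃ s₂ ∈ S, s₁ ≠ s₂ ∧ ∃ (p₁ : G.Walk v s₁) (p₂ : G.Walk v s₂),
      p₁.IsPath ∧ p₂.IsPath ∧ (∀ x ∈ p₁.support, x ∈ p₂.support → x = v) ∧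
      (∀ x ∈ p₁.support, x ∈ S → x = s₁) ∧ (∀ x ∈ p₂.support, x ∈ S → x = s₂) := by
  classical
  obtain ⟨s, hs⟩ := Set.nonempty_of_ncard_ne_zero (by omega : S.ncard ≠ 0)
  obtain ⟨t, ht, hts⟩ := Set.exists_ne_of_one_lt_ncard hS s
  obtain ⟨A₀, B₀, -, -, hAB₀⟩ :=
    hG.exists_internally_disjoint_paths (ne_of_mem_of_not_mem hs hv).symm
  obtain ⟨a, ha, A, hA, hAA₀, hAS⟩ := A₀.exists_isPath_first_mem hs
  obtain ⟨b, hb, B, hB, hBB₀, hBS⟩ := B₀.exists_isPath_first_mem hs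
  have hAB : ∀ x ∈ A.support, x ∈ B.support → x = v ∨ x = s :=
    fun x hxA hxB => hAB₀ x (hAA₀ hxA) (hBB₀ hxB)
  by_cases hab : a = b
  · subst hab
    obtain rfl : a = s :=
      (hAB a A.end_mem_support B.end_mem_support).resolve_left fun h => hv (h ▸ ha)
    obtain ⟨s₂, hs₂, hs₂a, h⟩ := hG.exists_fan_of_internallyDisjoint hv ha ht hts hA hB hAB hAS hBS
    exact ⟨a, ha, s₂, hs₂, hs₂a.symm, h⟩
  · refine ⟨a, ha, b, hb, hab, A, B, hA, hB, fun x hxA hxB => ?_, hAS, hBS⟩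
    refine (hAB x hxA hxB).resolve_right fun hxs => hab ?_
    subst hxs
    exact (hAS _ hxA hs).symm.trans (hBS _ hxB hs)

end TwoConnected

theorem twoConnected_fan_general {V : Type*}
    (G : SimpleGraph V) (hG : TwoConnected G) (v : V) (S : Set V)
    (hv : v ∉ S) (hS : 2 ≤ S.ncard) :
    ∃ s₁ ∈ S, ∃ s₂ ∈ S, s₁ ≠ s₂ ∧
      ∃ (p₁ : G.Walk v s₁) (p₂ : G.Walk v s₂), p₁.IsPath ∧ p₂.IsPath ∧
        {x | x ∈ p₁.support} ∩ {x | x ∈ p₂.support} = {v} ∧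
        (∀ x ∈ p₁.support, x ∈ S → x = s₁) ∧
        (∀ x ∈ p₂.support, x ∈ S → x = s₂) := by
  obtain ⟨s₁, hs₁, s₂, hs₂, hne, p₁, p₂, hp₁, hp₂, hdisj, hS₁, hS₂⟩ := hG.exists_fan hv hS
  exact ⟨s₁, hs₁, s₂, hs₂, hne, p₁, p₂, hp₁, hp₂,
    SimpleGraph.Walk.inter_support_eq_singleton hdisj, hS₁, hS₂⟩

/-- Fan lemma for `k = 2`: in a 2-vertex-connected graph, given a vertex `v` and a
set `S` (not containing `v`) with at least 2 elements, there are two paths from `v`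
to two distinct vertices of `S`, vertex-disjoint except at `v`, whose internal
vertices avoid `S`. -/
theorem twoConnected_fan {V : Type*} [Finite V]
    (G : SimpleGraph V) (hG : TwoConnected G) (v : V) (S : Set V)
    (hv : v ∉ S) (hS : 2 ≤ S.ncard) :
    ∃ s₁ ∈ S, ∃ s₂ ∈ S, s₁ ≠ s₂ ∧
      ∃ (p₁ : G.Walk v s₁) (p₂ : G.Walk v s₂), p₁.IsPath ∧ p₂.IsPath ∧
        {x | x ∈ p₁.support} ∩ {x | x ∈ p₂.support} = {v} ∧
        (∀ x ∈ p₁.support, x ∈ S → x = s₁) ∧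
        (∀ x ∈ p₂.support, x ∈ S → x = s₂) :=
  twoConnected_fan_general G hG v S hv hS
end

section
/- In a 2-vertex-connected graph G with at least 4 vertices, for any vertex cut {v₁, v₂} and any component D of G − {v₁, v₂}, the subgraph induced by V(D) ∪ {v₁, v₂} together with the virtual edge v₁v₂ is 2-vertex-connected. -/
lemma comp_closed {V : Type*} (G : SimpleGraph V) (v₁ v₂ : V)
    (C : ((⊤ : G.Subgraph).deleteVerts {v₁, v₂}).coe.ConnectedComponent)
    {x y : V} (hx : x ∈ Subtype.val '' C.supp) (hy1 : y ≠ v₁) (hy2 : y ≠ v₂)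
    (hadj : G.Adj x y) : y ∈ Subtype.val '' C.supp := by
  obtain ⟨x', hx', rfl⟩ := hx
  have hy : y ∈ ((⊤ : G.Subgraph).deleteVerts {v₁, v₂}).verts := by
    simp [hy1, hy2]
  refine ⟨⟨y, hy⟩, ?_, rfl⟩
  rw [SimpleGraph.ConnectedComponent.mem_supp_iff] at hx' ⊢
  rw [← hx']
  apply SimpleGraph.ConnectedComponent.sound
  apply SimpleGraph.Adj.reachable
  have hx2 := x'.2.2
  simp only [Set.mem_insert_iff, Set.mem_singleton_iff, not_or] at hx2
  simp only [SimpleGraph.Subgraph.coe_adj, SimpleGraph.Subgraph.deleteVerts_adj,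
    SimpleGraph.Subgraph.top_adj]
  exact ⟨trivial, by simp [hy1, hy2], trivial, by simp [hx2.1, hx2.2], hadj.symm⟩

def mkVert {W : Type*} (H : SimpleGraph W) (w a : W) (h : a ≠ w) :
    ↑(((⊤ : H.Subgraph).deleteVerts {w}).verts) :=
  ⟨a, ⟨trivial, h⟩⟩

/-- In a 2-vertex-connected graph `G` with at least 4 vertices, for any 2-vertex cut
`{v₁, v₂}` and any connected component `C` of `G − {v₁, v₂}`, the subgraph induced on
`V(C) ∪ {v₁, v₂}` together with the virtual edge `v₁v₂` is 2-vertex-connected. -/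
theorem split_component_with_virtual_edge_twoConnected {V : Type*} [Finite V]
    (G : SimpleGraph V) (hG : TwoConnected G) (hcard : 4 ≤ Nat.card V)
    (v₁ v₂ : V) (hne : v₁ ≠ v₂)
    (hcut : ¬ ((⊤ : G.Subgraph).deleteVerts {v₁, v₂}).coe.Connected)
    (C : ((⊤ : G.Subgraph).deleteVerts {v₁, v₂}).coe.ConnectedComponent)
    (S : Set V) (hS : S = Subtype.val '' C.supp ∪ {v₁, v₂})
    (h₁ : v₁ ∈ S) (h₂ : v₂ ∈ S) :
    TwoConnected
      (G.induce S ⊔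
        SimpleGraph.fromEdgeSet {s((⟨v₁, h₁⟩ : S), (⟨v₂, h₂⟩ : S))}) := by
  classical
  set Cimg : Set V := Subtype.val '' C.supp with hCimg
  set Hg : SimpleGraph ↥S :=
    G.induce S ⊔ SimpleGraph.fromEdgeSet {s((⟨v₁, h₁⟩ : S), (⟨v₂, h₂⟩ : S))} with hHg
  have hCS : Cimg ⊆ S := hS ▸ Set.subset_union_left
  have hCv : ∀ a ∈ Cimg, a ≠ v₁ ∧ a ≠ v₂ := by
    rintro a ⟨x', _, rfl⟩
    have h := x'.2.2
    simp only [Set.mem_insert_iff, Set.mem_singleton_iff, not_or] at h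
    exact h
  have hadjH : ∀ (a b : V) (ha : a ∈ S) (hb : b ∈ S), G.Adj a b →
      Hg.Adj ⟨a, ha⟩ ⟨b, hb⟩ := by
    intro a b ha hb h
    exact Or.inl (by simpa using h)
  have hvirt : Hg.Adj ⟨v₁, h₁⟩ ⟨v₂, h₂⟩ := by
    refine Or.inr ⟨rfl, fun h => hne (congrArg Subtype.val h)⟩
  constructor
  · -- cardinality
    obtain ⟨c0, hc0⟩ := C.exists_rep
    have hc0' : (c0 : V) ∈ Cimg := ⟨c0, by
      rw [SimpleGraph.ConnectedComponent.mem_supp_iff]; exact hc0, rfl⟩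
    have hd := hCv _ hc0'
    have hsub : ({(c0 : V), v₁, v₂} : Set V) ⊆ S := by
      intro a ha
      simp only [Set.mem_insert_iff, Set.mem_singleton_iff] at ha
      rcases ha with rfl | rfl | rfl
      · exact hCS hc0'
      · exact h₁
      · exact h₂
    calc (3 : ℕ) = ({(c0 : V), v₁, v₂} : Set V).ncard := by
          rw [Set.ncard_insert_of_notMem (by simp [hd.1, hd.2]) (Set.toFinite _),
            Set.ncard_insert_of_notMem (by simp [hne]) (Set.toFinite _),
            Set.ncard_singleton]
      _ ≤ S.ncard := Set.ncard_le_ncard hsub (Set.toFinite _)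
      _ = Nat.card ↥S := (Nat.card_coe_set_eq S).symm
  · intro w
    set D := ((⊤ : Hg.Subgraph).deleteVerts {w}).coe with hD
    set Gw := ((⊤ : G.Subgraph).deleteVerts {(w : V)}).coe with hGw
    have hGadj : ∀ {a b}, Gw.Adj a b → G.Adj a.val b.val := fun h =>
      ((⊤ : G.Subgraph).deleteVerts {(w : V)}).coe_adj_sub _ _ h
    have hneW : ∀ (a : ↑(((⊤ : G.Subgraph).deleteVerts {(w : V)}).verts)),
        a.val ≠ (w : V) := fun a e => a.2.2 e
    -- lift adjacency to D
    have hadjD : ∀ (a b : V) (ha : a ∈ S) (hb : b ∈ S) (haw : a ≠ (w : V))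
        (hbw : b ≠ (w : V)), Hg.Adj ⟨a, ha⟩ ⟨b, hb⟩ →
        D.Adj (mkVert Hg w ⟨a, ha⟩ (fun e => haw (congrArg Subtype.val e)))
          (mkVert Hg w ⟨b, hb⟩ (fun e => hbw (congrArg Subtype.val e))) := by
      intro a b ha hb haw hbw h
      simp only [hD, SimpleGraph.Subgraph.coe_adj, SimpleGraph.Subgraph.deleteVerts_adj,
        SimpleGraph.Subgraph.top_adj]
      refine ⟨trivial, ?_, trivial, ?_, h⟩
      · simp only [Set.mem_singleton_iff]
        exact fun e => haw (congrArg Subtype.val e)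
      · simp only [Set.mem_singleton_iff]
        exact fun e => hbw (congrArg Subtype.val e)
    have claim : ∀ (t : V) (htS : t ∈ S) (ht12 : t = v₁ ∨ t = v₂) (htw : t ≠ (w : V))
        (x' y' : ↑(((⊤ : G.Subgraph).deleteVerts {(w : V)}).verts))
        (p : Gw.Walk x' y'),
        ∀ (hy' : y'.val = t) (hx : x'.val ∈ Cimg),
          D.Reachable (mkVert Hg w ⟨x'.val, hCS hx⟩
              (fun e => hneW x' (congrArg Subtype.val e)))
            (mkVert Hg w ⟨t, htS⟩ (fun e => htw (congrArg Subtype.val e))) := by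
      intro t htS ht12 htw x' y' p
      induction p with
      | nil =>
        intro hy' hx
        rcases ht12 with rfl | rfl
        · exact absurd hy' (hCv _ hx).1
        · exact absurd hy' (hCv _ hx).2
      | @cons a b c h q ih =>
        intro hy' hx
        have hGab : G.Adj a.val b.val := hGadj h
        by_cases hy : b.val ∈ Cimg
        · exact ((hadjD a.val b.val (hCS hx) (hCS hy)
            (hneW a) (hneW b) (hadjH _ _ _ _ hGab)).reachable).trans (ih hy' hy)
        · have hy12 : b.val = v₁ ∨ b.val = v₂ := by
            by_contra hcon
            push_neg at hcon
            exact hy (comp_closed G v₁ v₂ C hx hcon.1 hcon.2 hGab)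
          have hbS : b.val ∈ S := by
            rcases hy12 with e | e
            · exact e ▸ h₁
            · exact e ▸ h₂
          have step1 : D.Adj (mkVert Hg w ⟨a.val, hCS hx⟩
              (fun e => hneW a (congrArg Subtype.val e)))
              (mkVert Hg w ⟨b.val, hbS⟩ (fun e => hneW b (congrArg Subtype.val e))) :=
            hadjD _ _ _ _ (hneW a) (hneW b) (hadjH _ _ _ _ hGab)
          by_cases hyt : b.val = t
          · have e2 : (mkVert Hg w ⟨b.val, hbS⟩ (fun e => hneW b (congrArg Subtype.val e)))
                = (mkVert Hg w ⟨t, htS⟩ (fun e => htw (congrArg Subtype.val e))) :=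
              Subtype.ext (Subtype.ext hyt)
            exact (e2 ▸ step1).reachable
          · have hHadj : Hg.Adj ⟨b.val, hbS⟩ ⟨t, htS⟩ := by
              rcases hy12 with e | e
              · have ht2 : t = v₂ := by
                  rcases ht12 with rfl | rfl
                  · exact absurd e hyt
                  · rfl
                rw [show ((⟨b.val, hbS⟩ : S)) = ⟨v₁, h₁⟩ from Subtype.ext e,
                  show ((⟨t, htS⟩ : S)) = ⟨v₂, h₂⟩ from Subtype.ext ht2]
                exact hvirt
              · have ht2 : t = v₁ := by
                  rcases ht12 with rfl | rfl
                  · rfl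
                  · exact absurd e hyt
                rw [show ((⟨b.val, hbS⟩ : S)) = ⟨v₂, h₂⟩ from Subtype.ext e,
                  show ((⟨t, htS⟩ : S)) = ⟨v₁, h₁⟩ from Subtype.ext ht2]
                exact hvirt.symm
            have step2 : D.Adj (mkVert Hg w ⟨b.val, hbS⟩
                (fun e => hneW b (congrArg Subtype.val e)))
                (mkVert Hg w ⟨t, htS⟩ (fun e => htw (congrArg Subtype.val e))) :=
              hadjD _ _ _ _ (hneW b) htw hHadj
            exact (step1.reachable).trans step2.reachable
    -- per-vertex reachability toward a fixed target
    have hv₁C : v₁ ∉ Cimg := fun h => (hCv _ h).1 rfl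
    have hv₂C : v₂ ∉ Cimg := fun h => (hCv _ h).2 rfl
    have reach : ∀ (t : V) (htS : t ∈ S) (ht12 : t = v₁ ∨ t = v₂) (htw : t ≠ (w : V))
        (u : ↑(((⊤ : Hg.Subgraph).deleteVerts {w}).verts)), u.val.val ∈ Cimg →
        D.Reachable u (mkVert Hg w ⟨t, htS⟩ (fun e => htw (congrArg Subtype.val e))) := by
      intro t htS ht12 htw u hu
      have huw : u.val.val ≠ (w : V) := fun e => u.2.2 (Subtype.ext e)
      obtain ⟨p⟩ := (hG.2 (w : V)).preconnected ⟨u.val.val, ⟨trivial, huw⟩⟩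
        ⟨t, ⟨trivial, htw⟩⟩
      exact claim t htS ht12 htw _ _ p rfl hu
    have finish : ∀ (T : ↑(((⊤ : Hg.Subgraph).deleteVerts {w}).verts)),
        (∀ u, D.Reachable u T) → D.Connected := by
      intro T hT
      rw [SimpleGraph.connected_iff]
      exact ⟨fun u u' => (hT u).trans (hT u').symm, ⟨T⟩⟩
    have hwS : (w : V) ∈ Cimg ∪ {v₁, v₂} := hS ▸ w.2
    rcases hwS with hw | hw
    · -- removed a vertex of the component: target v₁
      have htw1 : v₁ ≠ (w : V) := fun e => hv₁C (e ▸ hw)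
      have htw2 : v₂ ≠ (w : V) := fun e => hv₂C (e ▸ hw)
      refine finish (mkVert Hg w ⟨v₁, h₁⟩ (fun e => htw1 (congrArg Subtype.val e))) ?_
      intro u
      have hu : u.val.val ∈ Cimg ∪ {v₁, v₂} := hS ▸ u.val.2
      rcases hu with hu | hu
      · exact reach v₁ h₁ (Or.inl rfl) htw1 u hu
      · rcases hu with e | e
        · have e' : u = mkVert Hg w ⟨v₁, h₁⟩ (fun e => htw1 (congrArg Subtype.val e)) :=
            Subtype.ext (Subtype.ext e)
          rw [e']
        · have e' : u = mkVert Hg w ⟨v₂, h₂⟩ (fun e => htw2 (congrArg Subtype.val e)) :=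
            Subtype.ext (Subtype.ext e)
          rw [e']
          exact (hadjD v₂ v₁ h₂ h₁ htw2 htw1 hvirt.symm).reachable
    · rcases hw with hw | hw
      · -- removed v₁ : target v₂
        have htw2 : v₂ ≠ (w : V) := fun e => hne (e.trans hw).symm
        refine finish (mkVert Hg w ⟨v₂, h₂⟩ (fun e => htw2 (congrArg Subtype.val e))) ?_
        intro u
        have huw : u.val.val ≠ (w : V) := fun e => u.2.2 (Subtype.ext e)
        have hu : u.val.val ∈ Cimg ∪ {v₁, v₂} := hS ▸ u.val.2
        rcases hu with hu | hu
        · exact reach v₂ h₂ (Or.inr rfl) htw2 u hu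
        · rcases hu with e | e
          · exact absurd (e.trans hw.symm) huw
          · have e' : u = mkVert Hg w ⟨v₂, h₂⟩ (fun e => htw2 (congrArg Subtype.val e)) :=
              Subtype.ext (Subtype.ext e)
            rw [e']
      · -- removed v₂ : target v₁
        have htw1 : v₁ ≠ (w : V) := fun e => hne (e.trans hw)
        refine finish (mkVert Hg w ⟨v₁, h₁⟩ (fun e => htw1 (congrArg Subtype.val e))) ?_
        intro u
        have huw : u.val.val ≠ (w : V) := fun e => u.2.2 (Subtype.ext e)
        have hu : u.val.val ∈ Cimg ∪ {v₁, v₂} := hS ▸ u.val.2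
        rcases hu with hu | hu
        · exact reach v₁ h₁ (Or.inl rfl) htw1 u hu
        · rcases hu with e | e
          · have e' : u = mkVert Hg w ⟨v₁, h₁⟩ (fun e => htw1 (congrArg Subtype.val e)) :=
              Subtype.ext (Subtype.ext e)
            rw [e']
          · exact absurd (e.trans hw.symm) huw
end
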